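/- arXiv:1801.02276 — 3 statements merged into one kernel-verified Lean document; each statement's English description precedes it below -/
import Mathlib

section
/- For every pair of nonzero vectors Z, W ∈ ℂ^{m+1} and every t > 0, writing s = φ_W(Z), one has φ_W(Θ_{t,W} Z) = s / (s + t²(1 − s)). -/
open Real

/-- `phiW W Z = |⟨Z,W⟩|² / (|Z|²|W|²)`, the squared cosine of the Fubini–Study distance
between the lines `[Z]` and `[W]` in `ℂP^m`.  Here `inner ℂ W Z` is the Hermitian product,
linear in `Z`. -/
noncomputable def phiW {m : ℕ} (W Z : EuclideanSpace ℂ (Fin (m + 1))) : ℝ :=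
  ‖(inner ℂ W Z : ℂ)‖ ^ 2 / (‖Z‖ ^ 2 * ‖W‖ ^ 2)

/-- `ThetaW t W` is the ℂ-linear map `Z ↦ tZ + (1-t)(⟨Z,W⟩/|W|²)W`, i.e. the identity on
the line `ℂW` and multiplication by `t` on its orthogonal complement. -/
noncomputable def ThetaW {m : ℕ} (t : ℝ) (W Z : EuclideanSpace ℂ (Fin (m + 1))) :
    EuclideanSpace ℂ (Fin (m + 1)) :=
  (t : ℂ) • Z + (((1 : ℂ) - (t : ℂ)) * ((inner ℂ W Z : ℂ) / ((‖W‖ : ℂ) ^ 2))) • W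

/-- For nonzero `Z, W ∈ ℂ^{m+1}` and `t > 0`, with `s = φ_W(Z)`, one has
`φ_W(Θ_{t,W} Z) = s / (s + t² (1 - s))`. -/
theorem phiW_ThetaW {m : ℕ} (W Z : EuclideanSpace ℂ (Fin (m + 1)))
    (hW : W ≠ 0) (hZ : Z ≠ 0) (t : ℝ) (ht : 0 < t) :
    phiW W (ThetaW t W Z) = phiW W Z / (phiW W Z + t ^ 2 * (1 - phiW W Z)) := by
  set a : ℂ := (inner ℂ W Z : ℂ) with ha
  have hWn : (0:ℝ) < ‖W‖ := norm_pos_iff.mpr hW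
  have hZn : (0:ℝ) < ‖Z‖ := norm_pos_iff.mpr hZ
  have hW2 : (0:ℝ) < ‖W‖ ^ 2 := by positivity
  have hZ2 : (0:ℝ) < ‖Z‖ ^ 2 := by positivity
  have hWc : ((‖W‖:ℂ)) ^ 2 ≠ 0 := by
    have : (‖W‖ ^ 2 : ℝ) ≠ 0 := hW2.ne'
    exact_mod_cast this
  have hWc1 : (‖W‖:ℂ) ≠ 0 := by exact_mod_cast hWn.ne'
  have hWW : (inner ℂ W W : ℂ) = ((‖W‖:ℂ)) ^ 2 := by
    rw [inner_self_eq_norm_sq_to_K]; norm_cast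
  have hZZ : (inner ℂ Z Z : ℂ) = ((‖Z‖:ℂ)) ^ 2 := by
    rw [inner_self_eq_norm_sq_to_K]; norm_cast
  have hinner : (inner ℂ W (ThetaW t W Z) : ℂ) = a := by
    simp only [ThetaW, inner_add_right, inner_smul_right, ← ha, hWW]
    field_simp
    ring
  have hCS : ‖a‖ ^ 2 ≤ ‖Z‖ ^ 2 * ‖W‖ ^ 2 := by
    have := norm_inner_le_norm (𝕜 := ℂ) W Z
    nlinarith [norm_nonneg a, norm_nonneg (inner ℂ W Z : ℂ)]
  have hnorm : ‖ThetaW t W Z‖ ^ 2 = t ^ 2 * ‖Z‖ ^ 2 + (1 - t ^ 2) * ‖a‖ ^ 2 / ‖W‖ ^ 2 := by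
    have hZW : (inner ℂ Z W : ℂ) = starRingEnd ℂ a := by
      rw [ha, ← inner_conj_symm]
    have hnsq : (starRingEnd ℂ a) * a = ((‖a‖:ℂ)) ^ 2 := by
      rw [Complex.conj_mul']
    have hc : (inner ℂ (ThetaW t W Z) (ThetaW t W Z) : ℂ)
        = ((t ^ 2 * ‖Z‖ ^ 2 + (1 - t ^ 2) * ‖a‖ ^ 2 / ‖W‖ ^ 2 : ℝ) : ℂ) := by
      simp only [ThetaW, inner_add_left, inner_add_right, inner_smul_left, inner_smul_right,
        ← ha, hWW, hZZ, hZW]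
      simp only [map_sub, map_mul, map_div₀, map_pow, map_one, Complex.conj_ofReal]
      push_cast
      field_simp
      linear_combination ((1:ℂ) - (t:ℂ) ^ 2) * hnsq
    have h1 := congrArg Complex.re hc
    rw [Complex.ofReal_re] at h1
    rw [← h1]
    exact (inner_self_eq_norm_sq (𝕜 := ℂ) _).symm
  rw [phiW, phiW, hinner, hnorm]
  set S := ‖a‖ ^ 2 with hS
  have hS0 : (0:ℝ) ≤ S := by positivity
  have hden : 0 < (t ^ 2 * ‖Z‖ ^ 2 + (1 - t ^ 2) * S / ‖W‖ ^ 2) * ‖W‖ ^ 2 := by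
    have h : (t ^ 2 * ‖Z‖ ^ 2 + (1 - t ^ 2) * S / ‖W‖ ^ 2) * ‖W‖ ^ 2
        = S + t ^ 2 * (‖Z‖ ^ 2 * ‖W‖ ^ 2 - S) := by
      field_simp; ring
    rw [h]
    rcases le_or_gt (t ^ 2) 1 with h1 | h1
    · nlinarith [mul_pos (mul_pos ht ht) (mul_pos hZ2 hW2), mul_nonneg (sub_nonneg.mpr h1) hS0]
    · nlinarith [mul_pos hZ2 hW2]
  have hfrac1 : S / (‖Z‖ ^ 2 * ‖W‖ ^ 2) ≤ 1 := by
    rw [div_le_one (by positivity)]; exact hCS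
  have hfrac0 : (0:ℝ) ≤ S / (‖Z‖ ^ 2 * ‖W‖ ^ 2) := by positivity
  have hden2 : 0 < S / (‖Z‖ ^ 2 * ‖W‖ ^ 2) + t ^ 2 * (1 - S / (‖Z‖ ^ 2 * ‖W‖ ^ 2)) := by
    rcases le_or_gt (t ^ 2) 1 with h1 | h1
    · have ht2 : 0 < t ^ 2 := by positivity
      nlinarith
    · nlinarith
  rw [div_eq_div_iff hden.ne' hden2.ne']
  field_simp
  ring
end

section
/- Let W ∈ ℂ^{m+1} be nonzero, t > 0, and let r, ρ ∈ (0, π/2) satisfy tan ρ = t · tan r. Then for every nonzero Z ∈ ℂ^{m+1} one has φ_W(Z) > cos² r if and only if φ_W(Θ_{t,W} Z) > cos² ρ. In particular, since Θ_{t,W} is a bijection of ℂ^{m+1} \ {0}, the induced map θ_{t,[W]} maps the set {[Z] : φ_W(Z) > cos² r} (the Fubini–Study metric ball B_{[W]}(r)) onto the set {[Z] : φ_W(Z) > cos² ρ} (the ball B_{[W]}(ρ)). -/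
open Real

lemma inner_ThetaW {m : ℕ} (t : ℝ) (W Z : EuclideanSpace ℂ (Fin (m + 1))) (hW : W ≠ 0) :
    (inner ℂ W (ThetaW t W Z) : ℂ) = inner ℂ W Z := by
  have hw : (‖W‖ : ℂ) ≠ 0 := by exact_mod_cast norm_ne_zero_iff.mpr hW
  simp only [ThetaW, inner_add_right, inner_smul_right,
    inner_self_eq_norm_sq_to_K]
  field_simp
  simp only [Complex.coe_algebraMap]
  ring

lemma norm_ThetaW_sq {m : ℕ} (t : ℝ) (W Z : EuclideanSpace ℂ (Fin (m + 1))) (hW : W ≠ 0) :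
    ‖ThetaW t W Z‖ ^ 2 * ‖W‖ ^ 2
      = t ^ 2 * (‖Z‖ ^ 2 * ‖W‖ ^ 2) + (1 - t ^ 2) * ‖(inner ℂ W Z : ℂ)‖ ^ 2 := by
  have hw : (‖W‖ : ℂ) ≠ 0 := by exact_mod_cast norm_ne_zero_iff.mpr hW
  have h := @norm_add_sq ℂ _ _ _ _ ((t : ℂ) • Z)
    ((((1 : ℂ) - (t : ℂ)) * ((inner ℂ W Z : ℂ) / ((‖W‖ : ℂ) ^ 2))) • W)
  rw [inner_smul_left, inner_smul_right, norm_smul, norm_smul,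
    show (inner ℂ Z W : ℂ) = starRingEnd ℂ (inner ℂ W Z) from (inner_conj_symm Z W).symm] at h
  rw [ThetaW, h]
  set ip : ℂ := inner ℂ W Z with hip
  simp only [norm_mul, norm_div, norm_pow, map_mul, map_sub, map_one, Complex.conj_ofReal, map_div₀,
    Complex.conj_conj, map_pow]
  have hW' : ‖W‖ ≠ 0 := norm_ne_zero_iff.mpr hW
  have hmc : ip * (starRingEnd ℂ) ip = ((‖ip‖ ^ 2 : ℝ) : ℂ) := by
    rw [Complex.mul_conj, Complex.normSq_eq_norm_sq]
  have hre : ((t : ℂ) * ((1 - (t : ℂ)) * (ip / ((‖W‖ : ℂ)) ^ 2) * (starRingEnd ℂ) ip))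
      = (((t * (1 - t) * (‖ip‖ ^ 2) / ‖W‖ ^ 2) : ℝ) : ℂ) := by
    rw [show (t : ℂ) * ((1 - (t : ℂ)) * (ip / ((‖W‖ : ℂ)) ^ 2) * (starRingEnd ℂ) ip)
        = (t : ℂ) * (1 - (t : ℂ)) * (ip * (starRingEnd ℂ) ip) / ((‖W‖ : ℂ)) ^ 2 from by ring,
      hmc]
    push_cast
    ring
  rw [hre]
  rw [show RCLike.re ((((t * (1 - t) * ‖ip‖ ^ 2 / ‖W‖ ^ 2) : ℝ) : ℂ))
      = t * (1 - t) * ‖ip‖ ^ 2 / ‖W‖ ^ 2 from by norm_cast]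
  rw [show (1 - (t:ℂ)) = ((1 - t : ℝ) : ℂ) from by push_cast; ring]
  simp only [RCLike.ofReal_re, Complex.ofReal_re, Complex.norm_real, Real.norm_eq_abs, abs_of_nonneg (norm_nonneg W), mul_pow,
    sq_abs, div_pow]
  field_simp
  ring

lemma ThetaW_inv {m : ℕ} (t t' : ℝ) (h : t' * t = 1) (W Z : EuclideanSpace ℂ (Fin (m + 1)))
    (hW : W ≠ 0) : ThetaW t' W (ThetaW t W Z) = Z := by
  have hw : (‖W‖ : ℂ) ≠ 0 := by exact_mod_cast norm_ne_zero_iff.mpr hW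
  have ht' : ((t' : ℂ)) * ((t : ℂ)) = 1 := by exact_mod_cast h
  have hA : (inner ℂ W (ThetaW t W Z) : ℂ) = inner ℂ W Z := inner_ThetaW t W Z hW
  show (t' : ℂ) • (ThetaW t W Z)
      + (((1 : ℂ) - (t' : ℂ)) * ((inner ℂ W (ThetaW t W Z) : ℂ) / ((‖W‖ : ℂ) ^ 2))) • W = Z
  rw [hA, ThetaW]
  set ip : ℂ := inner ℂ W Z
  match_scalars
  · linear_combination ht'
  · field_simp
    linear_combination (-ip) * ht'

lemma ThetaW_zero {m : ℕ} (t : ℝ) (W : EuclideanSpace ℂ (Fin (m + 1))) :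
    ThetaW t W 0 = 0 := by
  simp [ThetaW]

lemma cos_sq_mul_one_add_tan_sq {x : ℝ} (hx : Real.cos x ≠ 0) :
    Real.cos x ^ 2 * (1 + Real.tan x ^ 2) = 1 := by
  rw [Real.tan_eq_sin_div_cos]
  field_simp
  exact cos_sq_add_sin_sq x

lemma ball_arith (t s cr cρ c n N w : ℝ) (ht : 0 < t) (hcr : 0 < cr) (hcρ : 0 < cρ)
    (hcos_r : cr ^ 2 * (1 + s ^ 2) = 1) (hcos_ρ : cρ ^ 2 * (1 + t ^ 2 * s ^ 2) = 1)
    (hc0 : 0 ≤ c) (hn0 : 0 < n) (hw : 0 < w) (hCS : c ≤ n * w)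
    (hN : N * w = t ^ 2 * (n * w) + (1 - t ^ 2) * c) :
    0 < N ∧ (cr ^ 2 < c / (n * w) ↔ cρ ^ 2 < c / (N * w)) := by
  have hNw : 0 < N * w := by
    rcases hc0.lt_or_eq with h | h
    · nlinarith [mul_nonneg (sq_nonneg t) (sub_nonneg.mpr hCS)]
    · rw [hN, ← h]
      nlinarith [mul_pos (pow_pos ht 2) (mul_pos hn0 hw)]
  have hNpos : 0 < N := by nlinarith [hNw, hw]
  refine ⟨hNpos, ?_⟩
  rw [lt_div_iff₀ (by positivity), lt_div_iff₀ (by positivity)]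
  have e1 : n * w = cr ^ 2 * (n * w) * (1 + s ^ 2) := by
    linear_combination (-(n * w)) * hcos_r
  have e2 : cρ ^ 2 * (c * (1 + t ^ 2 * s ^ 2)) = c := by
    linear_combination c * hcos_ρ
  have e3 : N * w = cρ ^ 2 * (N * w) * (1 + t ^ 2 * s ^ 2) := by
    linear_combination (-(N * w)) * hcos_ρ
  have e4 : cr ^ 2 * (c * (1 + s ^ 2)) = c := by
    linear_combination c * hcos_r
  constructor
  · intro hlt
    have h1 := mul_lt_mul_of_pos_right hlt (show (0:ℝ) < 1 + s ^ 2 by positivity)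
    have key1 : n * w < c * (1 + s ^ 2) := by nlinarith [h1, e1]
    have h2 : N * w < c * (1 + t ^ 2 * s ^ 2) := by
      nlinarith [hN, mul_lt_mul_of_pos_left key1 (pow_pos ht 2)]
    nlinarith [mul_lt_mul_of_pos_left h2 (pow_pos hcρ 2), e2]
  · intro hlt
    have h1 := mul_lt_mul_of_pos_right hlt (show (0:ℝ) < 1 + t ^ 2 * s ^ 2 by positivity)
    have key2 : n * w < c * (1 + s ^ 2) := by
      nlinarith [h1, e3, hN, pow_pos ht 2]
    nlinarith [mul_lt_mul_of_pos_left key2 (pow_pos hcr 2), e4]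

/-- If `tan ρ = t · tan r` with `r, ρ ∈ (0, π/2)` and `t > 0`, then for every nonzero `Z`
one has `φ_W(Z) > cos² r ↔ φ_W(Θ_{t,W} Z) > cos² ρ`; in particular `Θ_{t,W}` maps the
(vector-level) Fubini–Study ball `B_{[W]}(r)` onto the ball `B_{[W]}(ρ)`. -/
theorem ThetaW_maps_balls {m : ℕ} (W : EuclideanSpace ℂ (Fin (m + 1))) (hW : W ≠ 0)
    (t : ℝ) (ht : 0 < t) (r ρ : ℝ)
    (hr : r ∈ Set.Ioo 0 (Real.pi / 2)) (hρ : ρ ∈ Set.Ioo 0 (Real.pi / 2))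
    (hrel : Real.tan ρ = t * Real.tan r) :
    (∀ Z : EuclideanSpace ℂ (Fin (m + 1)), Z ≠ 0 →
      ((Real.cos r) ^ 2 < phiW W Z ↔ (Real.cos ρ) ^ 2 < phiW W (ThetaW t W Z))) ∧
    ThetaW t W '' {Z : EuclideanSpace ℂ (Fin (m + 1)) | Z ≠ 0 ∧ (Real.cos r) ^ 2 < phiW W Z}
      = {Z : EuclideanSpace ℂ (Fin (m + 1)) | Z ≠ 0 ∧ (Real.cos ρ) ^ 2 < phiW W Z} := by
  have hcr : 0 < Real.cos r :=
    Real.cos_pos_of_mem_Ioo ⟨by linarith [Real.pi_pos, hr.1], hr.2⟩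
  have hcρ : 0 < Real.cos ρ :=
    Real.cos_pos_of_mem_Ioo ⟨by linarith [Real.pi_pos, hρ.1], hρ.2⟩
  have hwn : ‖W‖ ≠ 0 := norm_ne_zero_iff.mpr hW
  have hw : (0:ℝ) < ‖W‖ ^ 2 := by positivity
  set s := Real.tan r with hs
  have hcos_r : Real.cos r ^ 2 * (1 + s ^ 2) = 1 := cos_sq_mul_one_add_tan_sq hcr.ne'
  have hcos_ρ : Real.cos ρ ^ 2 * (1 + t ^ 2 * s ^ 2) = 1 := by
    have := cos_sq_mul_one_add_tan_sq hcρ.ne'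
    rw [hrel] at this
    linear_combination this
  have main : ∀ Z : EuclideanSpace ℂ (Fin (m + 1)), Z ≠ 0 →
      ((Real.cos r) ^ 2 < phiW W Z ↔ (Real.cos ρ) ^ 2 < phiW W (ThetaW t W Z)) := by
    intro Z hZ
    have hp : (0:ℝ) < ‖Z‖ := norm_pos_iff.mpr hZ
    have hc0 : (0:ℝ) ≤ ‖(inner ℂ W Z : ℂ)‖ ^ 2 := by positivity
    have hn0 : (0:ℝ) < ‖Z‖ ^ 2 := by positivity
    have hCS : ‖(inner ℂ W Z : ℂ)‖ ^ 2 ≤ ‖Z‖ ^ 2 * ‖W‖ ^ 2 := by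
      have h1 := norm_inner_le_norm (𝕜 := ℂ) W Z
      have h2 : ‖(inner ℂ W Z : ℂ)‖ ^ 2 ≤ (‖W‖ * ‖Z‖) ^ 2 :=
        pow_le_pow_left₀ (norm_nonneg _) h1 2
      nlinarith
    have hN : ‖ThetaW t W Z‖ ^ 2 * ‖W‖ ^ 2
        = t ^ 2 * (‖Z‖ ^ 2 * ‖W‖ ^ 2) + (1 - t ^ 2) * ‖(inner ℂ W Z : ℂ)‖ ^ 2 :=
      norm_ThetaW_sq t W Z hW
    have harith := ball_arith t s (Real.cos r) (Real.cos ρ) (‖(inner ℂ W Z : ℂ)‖ ^ 2)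
      (‖Z‖ ^ 2) (‖ThetaW t W Z‖ ^ 2) (‖W‖ ^ 2) ht hcr hcρ hcos_r hcos_ρ hc0 hn0 hw hCS hN
    have hphi2 : phiW W (ThetaW t W Z) = ‖(inner ℂ W Z : ℂ)‖ ^ 2 / (‖ThetaW t W Z‖ ^ 2 * ‖W‖ ^ 2) := by
      rw [phiW, inner_ThetaW t W Z hW]
    rw [hphi2]
    exact harith.2
  refine ⟨main, ?_⟩
  ext Z'
  constructor
  · rintro ⟨Z, ⟨hZ, hlt⟩, rfl⟩
    refine ⟨?_, (main Z hZ).mp hlt⟩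
    intro h0
    apply hZ
    have := ThetaW_inv t t⁻¹ (by field_simp) W Z hW
    rw [h0, ThetaW_zero] at this
    exact this.symm
  · rintro ⟨hZ', hlt⟩
    have heq : ThetaW t W (ThetaW t⁻¹ W Z') = Z' :=
      ThetaW_inv t⁻¹ t (by field_simp) W Z' hW
    have hZ : ThetaW t⁻¹ W Z' ≠ 0 := by
      intro h0
      apply hZ'
      rw [← heq, h0, ThetaW_zero]
    exact ⟨ThetaW t⁻¹ W Z', ⟨hZ, (main _ hZ).mpr (by rwa [heq])⟩, heq⟩
end

section
/- Let W ∈ ℂ^{m+1} be nonzero, let R ∈ (0, π/4), and set t = 1/tan(2R). Then for every nonzero Z ∈ ℂ^{m+1} with φ_W(Z) ≥ cos² R one has φ_W(Θ_{t,W} Z) ≥ 4/5; consequently the function ψ_{R,W} satisfies ψ_{R,W}(Z) ≥ 3/10 whenever φ_W(Z) ≥ cos² R (i.e. on the Fubini–Study ball B_{[W]}(R)). -/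
open Real

/-- The cut-off function `ψ_{R,W}` supported in the Fubini–Study ball `B_{[W]}(2R)`:
`ψ_{R,W}(Z) = φ_W(Θ_{t,W} Z) − 1/2` with `t = 1/tan(2R)` if `φ_W(Z) > cos²(2R)`,
and `0` otherwise. -/
noncomputable def psiR {m : ℕ} (R : ℝ) (W Z : EuclideanSpace ℂ (Fin (m + 1))) : ℝ :=
  if (Real.cos (2 * R)) ^ 2 < phiW W Z then
    phiW W (ThetaW (1 / Real.tan (2 * R)) W Z) - 1 / 2
  else 0

set_option maxHeartbeats 2000000 in
/-- For `R ∈ (0, π/4)` and `t = 1/tan(2R)`: if `φ_W(Z) ≥ cos² R` (i.e. `[Z] ∈ B_{[W]}(R)`),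
then `φ_W(Θ_{t,W} Z) ≥ 4/5` and hence `ψ_{R,W}(Z) ≥ 3/10`. -/
theorem psiR_lower_bound {m : ℕ} (W : EuclideanSpace ℂ (Fin (m + 1))) (hW : W ≠ 0)
    (R : ℝ) (hR : R ∈ Set.Ioo 0 (Real.pi / 4))
    (Z : EuclideanSpace ℂ (Fin (m + 1))) (hZ : Z ≠ 0)
    (h : (Real.cos R) ^ 2 ≤ phiW W Z) :
    4 / 5 ≤ phiW W (ThetaW (1 / Real.tan (2 * R)) W Z) ∧ 3 / 10 ≤ psiR R W Z := by
  obtain ⟨hR0, hR4⟩ := hR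
  have hπ : (0:ℝ) < Real.pi := Real.pi_pos
  have hcosR : 0 < Real.cos R := Real.cos_pos_of_mem_Ioo ⟨by linarith, by linarith⟩
  have hcos2R : 0 < Real.cos (2*R) := Real.cos_pos_of_mem_Ioo ⟨by linarith, by linarith⟩
  have htanR : 0 < Real.tan R := Real.tan_pos_of_pos_of_lt_pi_div_two hR0 (by linarith)
  have htanR1 : Real.tan R < 1 := by
    have h1 : Real.tan R < Real.tan (Real.pi/4) :=
      Real.strictMonoOn_tan ⟨by linarith, by linarith⟩ ⟨by linarith, by linarith⟩ hR4
    rwa [Real.tan_pi_div_four] at h1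
  have htan2R : 0 < Real.tan (2*R) :=
    Real.tan_pos_of_pos_of_lt_pi_div_two (by linarith) (by linarith)
  set t := 1 / Real.tan (2 * R) with htdef
  have ht0 : 0 < t := one_div_pos.mpr htan2R
  have hne1 : (1 - Real.tan R ^ 2) ≠ 0 := by nlinarith
  have httan : t * Real.tan R = (1 - Real.tan R ^ 2) / 2 := by
    rw [htdef, Real.tan_two_mul]
    field_simp
  have hWn : (0:ℝ) < ‖W‖ := norm_pos_iff.mpr hW
  have hWc : ((‖W‖:ℂ)) ≠ 0 := by exact_mod_cast ne_of_gt hWn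
  set c : ℂ := (inner ℂ W Z : ℂ) / ((‖W‖:ℂ)^2) with hcdef
  set V : EuclideanSpace ℂ (Fin (m+1)) := Z - c • W with hVdef
  have hWW : (inner ℂ W W : ℂ) = (‖W‖:ℂ)^2 := inner_self_eq_norm_sq_to_K (𝕜 := ℂ) W
  have hWZ : (inner ℂ W Z : ℂ) = c * (‖W‖:ℂ)^2 := by
    rw [hcdef]; field_simp
  have hWV : (inner ℂ W V : ℂ) = 0 := by
    rw [hVdef, inner_sub_right, inner_smul_right, hWW, hWZ]; ring
  have hZdecomp : Z = c • W + V := by rw [hVdef]; module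
  have hΘ : ThetaW t W Z = c • W + (t:ℂ) • V := by
    rw [ThetaW, hVdef, ← hcdef]; module
  set A := ‖c‖^2 * ‖W‖^2 with hAdef
  set B := ‖V‖^2 with hBdef
  have hcWV : (inner ℂ (c • W) V : ℂ) = 0 := by
    rw [inner_smul_left, hWV, mul_zero]
  have hcWtV : (inner ℂ (c • W) ((t:ℂ) • V) : ℂ) = 0 := by
    rw [inner_smul_right, hcWV, mul_zero]
  have hZn : ‖Z‖^2 = A + B := by
    rw [hZdecomp, norm_add_sq (𝕜 := ℂ), hcWV]
    simp [norm_smul, mul_pow, hAdef, hBdef]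
  have hΘn : ‖ThetaW t W Z‖^2 = A + t^2 * B := by
    rw [hΘ, norm_add_sq (𝕜 := ℂ), hcWtV]
    simp [norm_smul, mul_pow, hAdef, hBdef, sq_abs]
  have hnormWZ : ‖(inner ℂ W Z : ℂ)‖^2 = A * ‖W‖^2 := by
    rw [hWZ]
    simp [norm_mul, mul_pow, hAdef, abs_of_nonneg (le_of_lt hWn)]
    ring
  have hinΘ : (inner ℂ W (ThetaW t W Z) : ℂ) = c * (‖W‖:ℂ)^2 := by
    rw [hΘ, inner_add_right, inner_smul_right, inner_smul_right, hWW, hWV]; ring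
  have hnormΘ : ‖(inner ℂ W (ThetaW t W Z) : ℂ)‖^2 = A * ‖W‖^2 := by
    rw [hinΘ]
    simp [norm_mul, mul_pow, hAdef, abs_of_nonneg (le_of_lt hWn)]
    ring
  have hA0 : 0 ≤ A := by positivity
  have hB0 : 0 ≤ B := by positivity
  have hZpos : 0 < ‖Z‖ := norm_pos_iff.mpr hZ
  have hAB : 0 < A + B := by rw [← hZn]; positivity
  have hφZ : phiW W Z = A / (A+B) := by
    rw [phiW, hnormWZ, hZn]
    rw [mul_div_mul_right _ _ (by positivity : ‖W‖^2 ≠ 0)]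
  have hkey : Real.cos R^2 * (A+B) ≤ A := (le_div_iff₀ hAB).mp (by rw [← hφZ]; exact h)
  have hA : 0 < A := lt_of_lt_of_le (by positivity) hkey
  have hsc : B * Real.cos R^2 ≤ Real.sin R^2 * A := by
    rw [Real.sin_sq]
    nlinarith [hkey]
  have hBle : B ≤ Real.tan R^2 * A := by
    rw [Real.tan_eq_sin_div_cos, div_pow, div_mul_eq_mul_div,
      le_div_iff₀ (pow_pos hcosR 2)]
    linarith
  have h1 : t^2 * Real.tan R ^2 = ((1-Real.tan R^2)/2)^2 := by
    rw [← mul_pow, httan]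
  have hx1 : Real.tan R^2 < 1 := by nlinarith
  have h2 : ((1-Real.tan R^2)/2)^2 ≤ 1/4 := by nlinarith [sq_nonneg (Real.tan R)]
  have hmain : 4 * (t^2 * B) ≤ A := by
    have h3 : t^2 * B ≤ t^2 * (Real.tan R^2 * A) :=
      mul_le_mul_of_nonneg_left hBle (sq_nonneg t)
    have h4 : t^2 * Real.tan R^2 * A ≤ (1/4) * A :=
      mul_le_mul_of_nonneg_right (by rw [h1]; exact h2) (le_of_lt hA)
    nlinarith
  have hφΘ : phiW W (ThetaW t W Z) = A / (A + t^2*B) := by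
    rw [phiW, hnormΘ, hΘn]
    rw [mul_div_mul_right _ _ (by positivity : ‖W‖^2 ≠ 0)]
  have hABt : 0 < A + t^2*B := by positivity
  have hgoal1 : 4/5 ≤ phiW W (ThetaW t W Z) := by
    rw [hφΘ, le_div_iff₀ hABt]; nlinarith
  refine ⟨hgoal1, ?_⟩
  have hcc : Real.cos (2*R) < Real.cos R :=
    Real.cos_lt_cos_of_nonneg_of_le_pi (le_of_lt hR0) (by linarith) (by linarith)
  have hcond : Real.cos (2*R)^2 < phiW W Z :=
    lt_of_lt_of_le (by nlinarith) h
  rw [psiR, if_pos hcond]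
  linarith
end
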